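/- For every λ ∈ (0,1) and every χ ∈ ℝ, the second derivative of f_λ satisfies f_λ''(χ) ≥ 3χ² − 1. -/

import Mathlib

/-!
The potential is the double well `(χ² - 1)² / 4` plus a penalty acting outside `[-1, 1]`:
`f_λ χ = (χ² - 1)² / 4 + ψ (χ - 1) + ψ (-1 - χ)`, where in truncated powers
`ψ t = (t₊³ - (t - λ)₊³) / (6 λ²)`. Since `t ↦ t₊ⁿ` is differentiable with derivative `n t₊ⁿ⁻¹`
for `n ≥ 2`, one gets `ψ'' t = (t₊ - (t - λ)₊) / λ² ≥ 0`, hence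
`f_λ'' χ = 3 χ² - 1 + ψ'' (χ - 1) + ψ'' (-1 - χ) ≥ 3 χ² - 1`.
-/

/-- The smoothed double-well potential `f_λ`. -/
noncomputable def smoothPotential (l x : ℝ) : ℝ :=
  if 1 + l ≤ x then 1 / (2 * l) * (x - (1 + l / 2)) ^ 2 + 1 / 4 * (x ^ 2 - 1) ^ 2 + l / 24
  else if 1 < x then 1 / 4 * (x ^ 2 - 1) ^ 2 + 1 / (6 * l ^ 2) * (x - 1) ^ 3
  else if -1 ≤ x then 1 / 4 * (x ^ 2 - 1) ^ 2
  else if -1 - l < x then 1 / 4 * (x ^ 2 - 1) ^ 2 - 1 / (6 * l ^ 2) * (x + 1) ^ 3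
  else 1 / (2 * l) * (x + (1 + l / 2)) ^ 2 + 1 / 4 * (x ^ 2 - 1) ^ 2 + l / 24

open Set

theorem hasDerivAt_max_zero_pow {n : ℕ} (hn : 2 ≤ n) (t : ℝ) :
    HasDerivAt (fun s => max s 0 ^ n) (n * max t 0 ^ (n - 1)) t := by
  have hn0 : n ≠ 0 := by omega
  have hn1 : n - 1 ≠ 0 := by omega
  have on_Iic : EqOn (fun s : ℝ => max s 0 ^ n) 0 (Iic 0) := fun s hs => by
    simp [max_eq_right (mem_Iic.1 hs), hn0]
  have on_Ici : EqOn (fun s : ℝ => max s 0 ^ n) (· ^ n) (Ici 0) := fun s hs => by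
    simp [max_eq_left (mem_Ici.1 hs)]
  rcases lt_trichotomy t 0 with ht | rfl | ht
  · rw [max_eq_right ht.le, zero_pow hn1, mul_zero]
    exact (hasDerivAt_const t 0).congr_of_eventuallyEq
      (Filter.eventuallyEq_of_mem (Iic_mem_nhds ht) on_Iic)
  · simp only [le_refl, max_eq_left, zero_pow hn1, mul_zero]
    have left : HasDerivWithinAt (fun s : ℝ => max s 0 ^ n) 0 (Iic 0) 0 :=
      (hasDerivWithinAt_const 0 _ 0).congr on_Iic (on_Iic self_mem_Iic)
    have right : HasDerivWithinAt (fun s : ℝ => max s 0 ^ n) 0 (Ici 0) 0 := by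
      have := (hasDerivAt_pow n (0 : ℝ)).hasDerivWithinAt (s := Ici 0)
      rw [zero_pow hn1, mul_zero] at this
      exact this.congr on_Ici (on_Ici self_mem_Ici)
    simpa only [Iic_union_Ici, hasDerivWithinAt_univ] using left.union right
  · rw [max_eq_left ht.le]
    exact (hasDerivAt_pow n t).congr_of_eventuallyEq
      (Filter.eventuallyEq_of_mem (Ici_mem_nhds ht) on_Ici)

noncomputable def penalty (l t : ℝ) : ℝ := (max t 0 ^ 3 - max (t - l) 0 ^ 3) / (6 * l ^ 2)

noncomputable def penaltyDeriv (l t : ℝ) : ℝ := (max t 0 ^ 2 - max (t - l) 0 ^ 2) / (2 * l ^ 2)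

theorem hasDerivAt_penalty (l t : ℝ) : HasDerivAt (penalty l) (penaltyDeriv l t) t := by
  have h3 := hasDerivAt_max_zero_pow (n := 3) (by norm_num)
  refine (((h3 t).sub ((h3 (t - l)).comp_sub_const t l)).div_const (6 * l ^ 2)).congr_deriv ?_
  simp only [penaltyDeriv]
  ring

theorem hasDerivAt_penaltyDeriv (l t : ℝ) :
    HasDerivAt (penaltyDeriv l) ((max t 0 - max (t - l) 0) / l ^ 2) t := by
  have h2 := hasDerivAt_max_zero_pow (n := 2) le_rfl
  refine (((h2 t).sub ((h2 (t - l)).comp_sub_const t l)).div_const (2 * l ^ 2)).congr_deriv ?_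
  ring

section

variable {l t : ℝ}

theorem penalty_of_nonpos (hl : 0 ≤ l) (ht : t ≤ 0) : penalty l t = 0 := by
  simp [penalty, max_eq_right ht, max_eq_right (by linarith : t - l ≤ 0)]

theorem penalty_of_mem_Icc (ht : t ∈ Icc 0 l) : penalty l t = t ^ 3 / (6 * l ^ 2) := by
  simp [penalty, max_eq_left ht.1, max_eq_right (sub_nonpos.2 ht.2)]

theorem penalty_of_le (hl : 0 < l) (ht : l ≤ t) :
    penalty l t = (t - l / 2) ^ 2 / (2 * l) + l / 24 := by
  rw [penalty, max_eq_left (by linarith), max_eq_left (sub_nonneg.2 ht)]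
  field_simp
  ring

theorem smoothPotential_eq (hl : 0 < l) (x : ℝ) :
    smoothPotential l x = (x ^ 2 - 1) ^ 2 / 4 + penalty l (x - 1) + penalty l (-1 - x) := by
  unfold smoothPotential
  split_ifs
  · rw [penalty_of_le hl (by linarith), penalty_of_nonpos hl.le (by linarith)]
    ring
  · rw [penalty_of_mem_Icc ⟨by linarith, by linarith⟩, penalty_of_nonpos hl.le (by linarith)]
    ring
  · rw [penalty_of_nonpos hl.le (by linarith), penalty_of_nonpos hl.le (by linarith)]
    ring
  · rw [penalty_of_nonpos hl.le (by linarith), penalty_of_mem_Icc ⟨by linarith, by linarith⟩]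
    ring
  · rw [penalty_of_nonpos hl.le (by linarith), penalty_of_le hl (by linarith)]
    ring

theorem deriv_smoothPotential (hl : 0 < l) :
    deriv (smoothPotential l) =
      fun x => x ^ 3 - x + penaltyDeriv l (x - 1) - penaltyDeriv l (-1 - x) := by
  ext x
  have hW : HasDerivAt (fun x : ℝ => (x ^ 2 - 1) ^ 2 / 4) (x ^ 3 - x) x := by
    refine ((((hasDerivAt_pow 2 x).sub_const 1).pow 2).div_const 4).congr_deriv ?_
    push_cast
    ring
  rw [funext (smoothPotential_eq hl)]
  exact ((hW.add ((hasDerivAt_penalty l (x - 1)).comp_sub_const x 1)).add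
    ((hasDerivAt_penalty l (-1 - x)).comp_const_sub (-1) x)).deriv

theorem hasDerivAt_deriv_smoothPotential (hl : 0 < l) (x : ℝ) :
    HasDerivAt (deriv (smoothPotential l))
      (3 * x ^ 2 - 1 + (max (x - 1) 0 - max (x - 1 - l) 0) / l ^ 2 +
        (max (-1 - x) 0 - max (-1 - x - l) 0) / l ^ 2) x := by
  have hW : HasDerivAt (fun x : ℝ => x ^ 3 - x) (3 * x ^ 2 - 1) x := by
    refine ((hasDerivAt_pow 3 x).sub (hasDerivAt_id' x)).congr_deriv ?_
    norm_num
  rw [deriv_smoothPotential hl]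
  refine ((hW.add ((hasDerivAt_penaltyDeriv l (x - 1)).comp_sub_const x 1)).sub
    ((hasDerivAt_penaltyDeriv l (-1 - x)).comp_const_sub (-1) x)).congr_deriv ?_
  ring

end

theorem deriv2_smoothPotential_ge (l : ℝ) (hl : l ∈ Set.Ioo (0 : ℝ) 1) (x : ℝ) :
    deriv (deriv (smoothPotential l)) x ≥ 3 * x ^ 2 - 1 := by
  have ramp_nonneg (t : ℝ) : 0 ≤ (max t 0 - max (t - l) 0) / l ^ 2 :=
    div_nonneg (sub_nonneg.2 (max_le_max_right 0 (by linarith [hl.1]))) (sq_nonneg l)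
  rw [(hasDerivAt_deriv_smoothPotential hl.1 x).deriv]
  linarith [ramp_nonneg (x - 1), ramp_nonneg (-1 - x)]
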